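/- arXiv:2504.10088 — 2 statements merged into one kernel-verified Lean document; each statement's English description precedes it below -/
import Mathlib

section
/- (Plotkin bound for b-symbol distance) Let q be a prime power, b ≥ 1, and let r = 1 - q^{-b}. If 2 ≤ d ≤ n and rn < d, then A_b(n,d,q) ≤ ⌊ d / (d - rn) ⌋. -/
open Finset

/-- Cyclic coordinate access: `cget z k` is the coordinate `z_k`, indices taken mod `n`. -/
def cget {Fq : Type*} [Zero Fq] {n : ℕ} (y : Fin n → Fq) (k : ℕ) : Fq :=
  if h : n = 0 then 0 else y ⟨k % n, Nat.mod_lt k (Nat.pos_of_ne_zero h)⟩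

/-- The `b`-symbol weight of a vector `y ∈ Fq^n`. -/
def wtb {Fq : Type*} [Zero Fq] [DecidableEq Fq] {n : ℕ} (b : ℕ) (y : Fin n → Fq) : ℕ :=
  ((Finset.range n).filter fun i => ∃ j : Fin b, cget y (i + j) ≠ 0).card

/-- The `b`-symbol distance on `Fq^n`. -/
def db {Fq : Type*} [Field Fq] [DecidableEq Fq] {n : ℕ} (b : ℕ) (x y : Fin n → Fq) : ℕ :=
  wtb b (x - y)


/-- `Asize Fq n b d` : the largest size of a code in `Fq^n` with minimum `b`-symbol
distance at least `d`. -/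
noncomputable def Asize (Fq : Type*) [Field Fq] [Fintype Fq] [DecidableEq Fq] (n b d : ℕ) : ℕ :=
  sSup {M | ∃ C : Finset (Fin n → Fq),
    (∀ x ∈ C, ∀ y ∈ C, x ≠ y → d ≤ db b x y) ∧ C.card = M}

lemma cget_sub {Fq : Type*} [Field Fq] {n : ℕ} (x y : Fin n → Fq) (k : ℕ) :
    cget (x - y) k = cget x k - cget y k := by
  unfold cget
  split
  · simp
  · simp [Pi.sub_apply]

/-- double counting: sum over x,y in C of [f x = f y] is at least |C|^2 / |β|. -/
lemma double_count {α β : Type*} [Fintype β] [DecidableEq β]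
    (C : Finset α) (f : α → β) :
    (C.card : ℝ)^2 ≤ (Fintype.card β : ℝ) *
      ∑ x ∈ C, ∑ y ∈ C, (if f x = f y then (1:ℝ) else 0) := by
  classical
  set m : β → ℕ := fun a => (C.filter fun x => f x = a).card with hm
  have h1 : ∑ x ∈ C, ∑ y ∈ C, (if f x = f y then (1:ℝ) else 0)
      = ∑ x ∈ C, (m (f x) : ℝ) := by
    refine Finset.sum_congr rfl fun x hx => ?_
    rw [Finset.sum_boole]
    congr 1
    simp only [hm]
    congr 1
    ext y
    simp [eq_comm]
  have h2 : ∑ x ∈ C, (m (f x) : ℝ) = ∑ a : β, (m a : ℝ)^2 := by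
    rw [← Finset.sum_fiberwise C f (fun x => (m (f x) : ℝ))]
    refine Finset.sum_congr rfl fun a _ => ?_
    have : ∀ x ∈ C.filter (fun x => f x = a), ((m (f x) : ℝ)) = (m a : ℝ) := by
      intro x hx
      rw [Finset.mem_filter] at hx
      rw [hx.2]
    rw [Finset.sum_congr rfl this, Finset.sum_const, hm]
    simp [sq, mul_comm]
  have h3 : ∑ a : β, (m a : ℝ) = C.card := by
    rw [hm]
    push_cast
    rw [Finset.sum_congr rfl (fun a _ => rfl)]
    norm_cast
    simpa using Finset.sum_card_fiberwise_eq_card_filter C Finset.univ f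
  have h4 := sq_sum_le_card_mul_sum_sq (s := Finset.univ) (f := fun a : β => (m a : ℝ))
  rw [h3] at h4
  rw [h1, h2]
  simpa [Finset.card_univ] using h4

lemma wtb_zero {Fq : Type*} [Zero Fq] [DecidableEq Fq] {n : ℕ} (b : ℕ) :
    wtb (Fq := Fq) (n := n) b 0 = 0 := by
  rw [wtb]
  convert Finset.card_empty
  rw [Finset.filter_eq_empty_iff]
  intro i _
  push_neg
  intro j
  unfold cget
  split <;> simp

lemma code_bound {Fq : Type*} [Field Fq] [Fintype Fq] [DecidableEq Fq]
    {n d b : ℕ}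
    (C : Finset (Fin n → Fq)) (hC : ∀ x ∈ C, ∀ y ∈ C, x ≠ y → d ≤ db b x y) :
    (C.card : ℝ) * ((d:ℝ) - (1 - ((Fintype.card Fq : ℝ)^b)⁻¹) * n) ≤ d := by
  classical
  set r : ℝ := 1 - ((Fintype.card Fq : ℝ)^b)⁻¹ with hrdef
  set M : ℝ := (C.card : ℝ) with hM
  have hq1 : (1:ℝ) ≤ (Fintype.card Fq : ℝ) := by
    exact_mod_cast Fintype.card_pos
  have hQpos : (0:ℝ) < (Fintype.card Fq : ℝ)^b := by positivity
  have hr0 : 0 ≤ r := by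
    rw [hrdef]
    have : ((Fintype.card Fq : ℝ)^b)⁻¹ ≤ 1 := by
      rw [inv_le_one_iff₀]
      right
      exact one_le_pow₀ hq1
    linarith
  have hdb : ∀ x y : Fin n → Fq, (db b x y : ℝ) =
      ∑ i ∈ Finset.range n,
        (if (fun j : Fin b => cget x (i + ↑j)) = (fun j : Fin b => cget y (i + ↑j))
          then (0:ℝ) else 1) := by
    intro x y
    rw [db, wtb, Finset.card_filter]
    push_cast
    refine Finset.sum_congr rfl fun i _ => ?_
    have hiff : (∃ j : Fin b, cget (x - y) (i + ↑j) ≠ 0) ↔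
        ¬((fun j : Fin b => cget x (i + ↑j)) = fun j : Fin b => cget y (i + ↑j)) := by
      rw [funext_iff]
      push_neg
      simp [cget_sub, sub_ne_zero]
    rw [if_congr hiff rfl rfl, ite_not]
  -- upper bound per coordinate
  have hcoord : ∀ i ∈ Finset.range n,
      (∑ x ∈ C, ∑ y ∈ C,
        (if (fun j : Fin b => cget x (i + ↑j)) = (fun j : Fin b => cget y (i + ↑j))
          then (0:ℝ) else 1)) ≤ r * M^2 := by
    intro i _
    have hdc := double_count C (fun x => (fun j : Fin b => cget x (i + ↑j)))
    have hcard : (Fintype.card (Fin b → Fq) : ℝ) = (Fintype.card Fq : ℝ)^b := by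
      rw [Fintype.card_fun, Fintype.card_fin]
      push_cast
      ring
    rw [hcard] at hdc
    have hsplit : (∑ x ∈ C, ∑ y ∈ C,
        (if (fun j : Fin b => cget x (i + ↑j)) = (fun j : Fin b => cget y (i + ↑j))
          then (0:ℝ) else 1)) =
        M^2 - ∑ x ∈ C, ∑ y ∈ C,
        (if (fun j : Fin b => cget x (i + ↑j)) = (fun j : Fin b => cget y (i + ↑j))
          then (1:ℝ) else 0) := by
      rw [eq_sub_iff_add_eq, ← Finset.sum_add_distrib]
      have : ∀ x ∈ C, (∑ y ∈ C,
          (if (fun j : Fin b => cget x (i + ↑j)) = (fun j : Fin b => cget y (i + ↑j))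
            then (0:ℝ) else 1)) + (∑ y ∈ C,
          (if (fun j : Fin b => cget x (i + ↑j)) = (fun j : Fin b => cget y (i + ↑j))
            then (1:ℝ) else 0)) = M := by
        intro x _
        rw [← Finset.sum_add_distrib]
        have : ∀ y ∈ C,
            (if (fun j : Fin b => cget x (i + ↑j)) = (fun j : Fin b => cget y (i + ↑j))
              then (0:ℝ) else 1) +
            (if (fun j : Fin b => cget x (i + ↑j)) = (fun j : Fin b => cget y (i + ↑j))
              then (1:ℝ) else 0) = 1 := by
          intro y _
          split <;> ring
        rw [Finset.sum_congr rfl this, Finset.sum_const, hM]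
        simp
      rw [Finset.sum_congr rfl this, Finset.sum_const, hM, sq]
      simp
    rw [hsplit]
    have h5 : M^2 / ((Fintype.card Fq : ℝ)^b) ≤
        ∑ x ∈ C, ∑ y ∈ C,
        (if (fun j : Fin b => cget x (i + ↑j)) = (fun j : Fin b => cget y (i + ↑j))
          then (1:ℝ) else 0) := by
      rw [div_le_iff₀ hQpos]
      calc M^2 ≤ (Fintype.card Fq : ℝ)^b * _ := hdc
        _ = _ := by ring
    rw [hrdef]
    have : M^2 * ((Fintype.card Fq : ℝ)^b)⁻¹ = M^2 / ((Fintype.card Fq : ℝ)^b) := by ring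
    nlinarith [h5]
  -- lower bound
  have hlow : (d:ℝ) * (M * (M - 1)) ≤ ∑ x ∈ C, ∑ y ∈ C, (db b x y : ℝ) := by
    rcases Nat.eq_zero_or_pos C.card with h0 | hpos
    · rw [Finset.card_eq_zero] at h0
      subst h0
      simp [hM]
    · have hterm : ∀ x ∈ C, (M - 1) * d ≤ ∑ y ∈ C, (db b x y : ℝ) := by
        intro x hx
        rw [← Finset.sum_erase_add C _ hx]
        have hxx : (db b x x : ℝ) = 0 := by
          rw [db, sub_self, wtb_zero]
          norm_num
        rw [hxx, add_zero]
        have := Finset.card_nsmul_le_sum (C.erase x) (fun y => (db b x y : ℝ)) (d : ℝ)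
          (fun y hy => by
            have hyC := Finset.mem_of_mem_erase hy
            have hne : x ≠ y := fun h => (Finset.ne_of_mem_erase hy h.symm).elim
            show (d:ℝ) ≤ (db b x y : ℝ)
            exact_mod_cast hC x hx y hyC hne)
        rw [Finset.card_erase_of_mem hx] at this
        calc (M - 1) * (d:ℝ) = ((C.card - 1 : ℕ) : ℝ) * d := by
              rw [Nat.cast_sub hpos, hM]; push_cast; ring
          _ ≤ _ := by simpa [nsmul_eq_mul] using this
      calc (d:ℝ) * (M * (M - 1)) = C.card • ((M - 1) * (d:ℝ)) := by
            rw [nsmul_eq_mul, hM]; ring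
        _ ≤ ∑ x ∈ C, ∑ y ∈ C, (db b x y : ℝ) := Finset.card_nsmul_le_sum C _ _ hterm
  -- upper bound on the double sum
  have hup : ∑ x ∈ C, ∑ y ∈ C, (db b x y : ℝ) ≤ (n : ℝ) * (r * M^2) := by
    calc ∑ x ∈ C, ∑ y ∈ C, (db b x y : ℝ)
        = ∑ i ∈ Finset.range n, ∑ x ∈ C, ∑ y ∈ C,
          (if (fun j : Fin b => cget x (i + ↑j)) = (fun j : Fin b => cget y (i + ↑j))
            then (0:ℝ) else 1) := by
          simp_rw [hdb]
          calc ∑ x ∈ C, ∑ y ∈ C, ∑ i ∈ Finset.range n,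
              (if (fun j : Fin b => cget x (i + ↑j)) = (fun j : Fin b => cget y (i + ↑j))
                then (0:ℝ) else 1)
              = ∑ x ∈ C, ∑ i ∈ Finset.range n, ∑ y ∈ C,
              (if (fun j : Fin b => cget x (i + ↑j)) = (fun j : Fin b => cget y (i + ↑j))
                then (0:ℝ) else 1) := Finset.sum_congr rfl fun x _ => Finset.sum_comm
            _ = _ := Finset.sum_comm
      _ ≤ ∑ _i ∈ Finset.range n, r * M^2 := Finset.sum_le_sum hcoord
      _ = (n : ℝ) * (r * M^2) := by rw [Finset.sum_const, Finset.card_range, nsmul_eq_mul]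
  have hkey : (d:ℝ) * (M * (M - 1)) ≤ (n:ℝ) * (r * M^2) := le_trans hlow hup
  have hM0 : 0 ≤ M := by rw [hM]; positivity
  rcases eq_or_lt_of_le hM0 with h | hMpos
  · rw [← h, zero_mul]
    positivity
  · have hd0 : (0:ℝ) ≤ d := Nat.cast_nonneg d
    nlinarith [hkey, hMpos, mul_pos hMpos hMpos]

/-- Corollary 4.6 (Plotkin bound for the `b`-symbol distance): with `r = 1 - q^{-b}`,
if `2 ≤ d ≤ n` and `r n < d` then `A_b(n,d,q) ≤ ⌊d / (d - r n)⌋`. -/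
theorem plotkin_bound {Fq : Type*} [Field Fq] [Fintype Fq] [DecidableEq Fq]
    {n d b : ℕ} (hb1 : 1 ≤ b) (hbn : b ≤ n) (hd : 2 ≤ d) (hdn : d ≤ n)
    (hr : (1 - ((Fintype.card Fq : ℝ) ^ b)⁻¹) * n < d) :
    (Asize Fq n b d : ℝ) ≤
      ⌊(d : ℝ) / ((d : ℝ) - (1 - ((Fintype.card Fq : ℝ) ^ b)⁻¹) * n)⌋ := by
  set r : ℝ := 1 - ((Fintype.card Fq : ℝ)^b)⁻¹ with hrdef
  set D : ℝ := (d : ℝ) / ((d : ℝ) - r * n) with hDdef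
  have hpos : (0:ℝ) < (d:ℝ) - r * n := by linarith
  have hD0 : 0 ≤ D := div_nonneg (Nat.cast_nonneg d) hpos.le
  have hfl : 0 ≤ ⌊D⌋ := Int.floor_nonneg.mpr hD0
  have key : ∀ M ∈ {M | ∃ C : Finset (Fin n → Fq),
      (∀ x ∈ C, ∀ y ∈ C, x ≠ y → d ≤ db b x y) ∧ C.card = M}, M ≤ ⌊D⌋.toNat := by
    rintro M ⟨C, hC, rfl⟩
    have h := code_bound C hC
    have h2 : (C.card : ℝ) ≤ D := by
      rw [hDdef, le_div_iff₀ hpos]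
      exact h
    have h3 : (C.card : ℤ) ≤ ⌊D⌋ := Int.le_floor.mpr (by exact_mod_cast h2)
    exact (Int.le_toNat hfl).mpr h3
  have hA : Asize Fq n b d ≤ ⌊D⌋.toNat := csSup_le ⟨0, ∅, by simp⟩ key
  calc (Asize Fq n b d : ℝ) ≤ ((⌊D⌋.toNat : ℕ) : ℝ) := by exact_mod_cast hA
    _ = (⌊D⌋ : ℝ) := by
      exact_mod_cast congrArg (fun z : ℤ => (z : ℝ)) (Int.toNat_of_nonneg hfl)
end

section
/- Let C be a code over F_q with minimum b-symbol distance d and let C_H be its concatenation with the q-ary simplex code of dimension b. If B_j^H(C_H) denotes the Hamming distance distribution of C_H and B_i^b(C) the b-symbol distance distribution of C, then B_j^H(C_H) = B_i^b(C) when j = i·q^{b-1} for some 0 ≤ i ≤ n, and B_j^H(C_H) = 0 otherwise. -/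
open Finset

/-!
Write `Φ(x) = x G` for the simplex encoder. Since `Φ` is linear and every nonzero codeword of
the simplex code has weight `q^{b-1}`, the blocks `Φ(c̄_i), Φ(c̄'_i)` are at Hamming distance
`q^{b-1}` if the windows `c̄_i, c̄'_i` differ and `0` otherwise. Summing over `i` gives
`d_H(c_H, c'_H) = q^{b-1} d_b(c, c')`. In particular `c ↦ c_H` is injective, so it maps pairs of
codewords bijectively onto pairs of codewords and rescales every distance by `q^{b-1}`, which is
exactly the claimed relation between the two distance distributions.
-/

open Matrix Function

noncomputable def distanceDistribution {α : Type*} (dist : α → α → ℕ) (C : Finset α) (i : ℕ) :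
    ℝ :=
  #((C ×ˢ C).filter fun uv => dist uv.1 uv.2 = i) / #C

section DistanceDistribution

variable {α β : Type*} [DecidableEq β] {dα : α → α → ℕ} {dβ : β → β → ℕ} {ψ : α → β} {w : ℕ}

theorem card_filter_image_product (hψ : Injective ψ) (C : Finset α) (P : β × β → Prop)
    [DecidablePred P] :
    #((C.image ψ ×ˢ C.image ψ).filter P) = #((C ×ˢ C).filter fun uv => P (ψ uv.1, ψ uv.2)) := by
  rw [← prodMap_image_product, filter_image, card_image_of_injective _ (hψ.prodMap hψ)]
  rfl

theorem distanceDistribution_image_mul (hψ : Injective ψ) (hw : w ≠ 0)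
    (hd : ∀ u v, dβ (ψ u) (ψ v) = dα u v * w) (C : Finset α) (i : ℕ) :
    distanceDistribution dβ (C.image ψ) (i * w) = distanceDistribution dα C i := by
  simp only [distanceDistribution, card_filter_image_product hψ, hd, Nat.mul_left_inj hw,
    card_image_of_injective _ hψ]

theorem distanceDistribution_image_eq_zero (hd : ∀ u v, dβ (ψ u) (ψ v) = dα u v * w)
    (C : Finset α) {j : ℕ} (hj : ∀ u ∈ C, ∀ v ∈ C, dα u v * w ≠ j) :
    distanceDistribution dβ (C.image ψ) j = 0 := by
  rw [distanceDistribution, filter_eq_empty_iff.mpr, card_empty, Nat.cast_zero, zero_div]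
  simp only [mem_product, mem_image]
  rintro ⟨_, _⟩ ⟨⟨u, hu, rfl⟩, ⟨v, hv, rfl⟩⟩
  exact (hd u v).trans_ne (hj u hu v hv)

end DistanceDistribution

theorem hammingDist_prod_eq_sum {ι κ β : Type*} [Fintype ι] [Fintype κ] [DecidableEq β]
    (f g : ι × κ → β) :
    hammingDist f g = ∑ i, hammingDist (fun j => f (i, j)) (fun j => g (i, j)) := by
  simp only [hammingDist, card_filter, Fintype.sum_prod_type]

theorem hammingDist_vecMul_of_constant_weight {R m k : Type*} [Ring R] [DecidableEq R]
    [Fintype m] [Fintype k] {G : Matrix m k R} {w : ℕ}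
    (hG : ∀ x : m → R, x ≠ 0 → hammingNorm (x ᵥ* G) = w) (x y : m → R) :
    hammingDist (x ᵥ* G) (y ᵥ* G) = if x = y then 0 else w := by
  rw [hammingDist_eq_hammingNorm, neg_add_eq_sub, ← sub_vecMul]
  split_ifs with h
  · simp [h]
  · exact hG _ (sub_ne_zero.mpr (Ne.symm h))

section Windows

variable {R : Type*} {n : ℕ}

theorem cget_fin [Zero R] (c : Fin n → R) (k : Fin n) : cget c k = c k := by
  simp [cget, k.pos.ne', Nat.mod_eq_of_lt k.isLt]

theorem cget_sub_s18 [AddGroup R] (u v : Fin n → R) (k : ℕ) : cget (u - v) k = cget u k - cget v k := by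
  unfold cget
  split_ifs <;> simp

def cyclicWindow [Zero R] (b : ℕ) (c : Fin n → R) (i : ℕ) : Fin b → R := fun t => cget c (i + t)

theorem cyclicWindow_sub [AddGroup R] (b : ℕ) (u v : Fin n → R) (i : ℕ) :
    cyclicWindow b (u - v) i = cyclicWindow b u i - cyclicWindow b v i :=
  funext fun _ => cget_sub_s18 u v _

variable [Field R] [DecidableEq R] {b : ℕ}

theorem db_eq_card_cyclicWindow_ne (u v : Fin n → R) :
    db b u v = #((range n).filter fun i => cyclicWindow b u i ≠ cyclicWindow b v i) := by
  unfold db wtb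
  congr 1
  ext i
  simp only [mem_filter, and_congr_right_iff]
  intro _
  rw [Ne, ← sub_eq_zero, ← cyclicWindow_sub, funext_iff]
  push Not
  rfl

theorem db_le (u v : Fin n → R) : db b u v ≤ n :=
  (card_filter_le _ _).trans (card_range n).le

theorem db_eq_zero_iff (hb : 1 ≤ b) {u v : Fin n → R} : db b u v = 0 ↔ u = v := by
  refine ⟨fun h => funext fun k => ?_, fun h => by simp [h, db_eq_card_cyclicWindow_ne]⟩
  rw [db_eq_card_cyclicWindow_ne, card_eq_zero, filter_eq_empty_iff] at h
  have hk := congrFun (not_not.mp (h (mem_range.mpr k.isLt))) ⟨0, hb⟩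
  simpa [cyclicWindow, cget_fin] using hk

end Windows

section Concatenation

variable {R : Type*} [Field R] [DecidableEq R] {n b N : ℕ}

def concatEncode (G : Matrix (Fin b) (Fin N) R) (c : Fin n → R) : Fin n × Fin N → R :=
  fun p => (cyclicWindow b c p.1 ᵥ* G) p.2

theorem hammingDist_concatEncode {G : Matrix (Fin b) (Fin N) R} {w : ℕ}
    (hG : ∀ x : Fin b → R, x ≠ 0 → hammingNorm (x ᵥ* G) = w) (u v : Fin n → R) :
    hammingDist (concatEncode G u) (concatEncode G v) = db b u v * w := by
  calc hammingDist (concatEncode G u) (concatEncode G v)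
      = ∑ i : Fin n, if cyclicWindow b u i = cyclicWindow b v i then 0 else w := by
        rw [hammingDist_prod_eq_sum]
        exact sum_congr rfl fun i _ => hammingDist_vecMul_of_constant_weight hG
          (cyclicWindow b u i) (cyclicWindow b v i)
    _ = ∑ i ∈ range n, if cyclicWindow b u i ≠ cyclicWindow b v i then w else 0 := by
        simp only [ite_not]
        exact Fin.sum_univ_eq_sum_range (fun i => if cyclicWindow b u i = cyclicWindow b v i
          then 0 else w) n
    _ = db b u v * w := by
        rw [db_eq_card_cyclicWindow_ne, card_filter, sum_mul]
        simp only [ite_mul, one_mul, zero_mul]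

theorem concatEncode_injective (hb : 1 ≤ b) {G : Matrix (Fin b) (Fin N) R} {w : ℕ} (hw : w ≠ 0)
    (hG : ∀ x : Fin b → R, x ≠ 0 → hammingNorm (x ᵥ* G) = w) :
    Injective (concatEncode (n := n) G) := fun u v h => by
  rw [← hammingDist_eq_zero, hammingDist_concatEncode hG, Nat.mul_eq_zero] at h
  exact (db_eq_zero_iff hb).mp (h.resolve_right hw)

end Concatenation

theorem distance_distribution_concat_general {Fq : Type*} [Field Fq] [Fintype Fq] [DecidableEq Fq]
    {n b N : ℕ} (hb1 : 1 ≤ b)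
    (G : Fin b → Fin N → Fq)
    (hwt : ∀ x : Fin b → Fq, x ≠ 0 →
      hammingNorm (fun j : Fin N => ∑ i : Fin b, x i * G i j) = Fintype.card Fq ^ (b - 1))
    (C : Finset (Fin n → Fq)) :
    (∀ i : ℕ, i ≤ n →
      ((((C.image fun c : Fin n → Fq => fun p : Fin n × Fin N =>
            ∑ t : Fin b, cget c ((p.1 : ℕ) + t) * G t p.2) ×ˢ
          (C.image fun c : Fin n → Fq => fun p : Fin n × Fin N =>
            ∑ t : Fin b, cget c ((p.1 : ℕ) + t) * G t p.2)).filter fun uv =>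
              hammingDist uv.1 uv.2 = i * Fintype.card Fq ^ (b - 1)).card : ℝ) /
          ((C.image fun c : Fin n → Fq => fun p : Fin n × Fin N =>
            ∑ t : Fin b, cget c ((p.1 : ℕ) + t) * G t p.2).card : ℝ)
        = (((C ×ˢ C).filter fun uv => db b uv.1 uv.2 = i).card : ℝ) / (C.card : ℝ)) ∧
    (∀ j : ℕ, (¬ ∃ i : ℕ, i ≤ n ∧ j = i * Fintype.card Fq ^ (b - 1)) →
      ((((C.image fun c : Fin n → Fq => fun p : Fin n × Fin N =>
            ∑ t : Fin b, cget c ((p.1 : ℕ) + t) * G t p.2) ×ˢ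
          (C.image fun c : Fin n → Fq => fun p : Fin n × Fin N =>
            ∑ t : Fin b, cget c ((p.1 : ℕ) + t) * G t p.2)).filter fun uv =>
              hammingDist uv.1 uv.2 = j).card : ℝ) /
          ((C.image fun c : Fin n → Fq => fun p : Fin n × Fin N =>
            ∑ t : Fin b, cget c ((p.1 : ℕ) + t) * G t p.2).card : ℝ) = 0) := by
  have hw : Fintype.card Fq ^ (b - 1) ≠ 0 := pow_ne_zero _ Fintype.card_ne_zero
  set ψ : (Fin n → Fq) → Fin n × Fin N → Fq :=
    fun c p => ∑ t : Fin b, cget c ((p.1 : ℕ) + t) * G t p.2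
  have hinj : Injective ψ := concatEncode_injective (G := G) hb1 hw hwt
  have hdist : ∀ u v, hammingDist (ψ u) (ψ v) = db b u v * Fintype.card Fq ^ (b - 1) :=
    hammingDist_concatEncode (G := G) hwt
  refine ⟨fun i _ => distanceDistribution_image_mul hinj hw hdist C i,
    fun j hj => distanceDistribution_image_eq_zero hdist C ?_⟩
  rintro u - v - rfl
  exact hj ⟨db b u v, db_le u v, rfl⟩

/-- Lemma 5.4: if `C_H` is the concatenation of `C` with the `q`-ary simplex code of
dimension `b` (generator matrix `G`, with `Φ(x) = x·G` injective, linear, of constant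
nonzero weight `q^{b-1}`), then the Hamming distance distribution of `C_H` satisfies
`B^H_{i·q^{b-1}}(C_H) = B^b_i(C)` for `0 ≤ i ≤ n`, and `B^H_j(C_H) = 0` whenever `j` is
not of the form `i·q^{b-1}` with `0 ≤ i ≤ n`. -/
theorem distance_distribution_concat {Fq : Type*} [Field Fq] [Fintype Fq] [DecidableEq Fq]
    {n b d N : ℕ} (hb1 : 1 ≤ b) (hbn : b ≤ n)
    (hN : N = (Fintype.card Fq ^ b - 1) / (Fintype.card Fq - 1))
    (G : Fin b → Fin N → Fq)
    (hinj : Function.Injective fun x : Fin b → Fq => fun j : Fin N => ∑ i : Fin b, x i * G i j)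
    (hwt : ∀ x : Fin b → Fq, x ≠ 0 →
      hammingNorm (fun j : Fin N => ∑ i : Fin b, x i * G i j) = Fintype.card Fq ^ (b - 1))
    (C : Finset (Fin n → Fq)) (hC : C.Nonempty)
    (hmin : ∀ x ∈ C, ∀ y ∈ C, x ≠ y → d ≤ db b x y)
    (hex : ∃ x ∈ C, ∃ y ∈ C, x ≠ y ∧ db b x y = d) :
    (∀ i : ℕ, i ≤ n →
      ((((C.image fun c : Fin n → Fq => fun p : Fin n × Fin N =>
            ∑ t : Fin b, cget c ((p.1 : ℕ) + t) * G t p.2) ×ˢ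
          (C.image fun c : Fin n → Fq => fun p : Fin n × Fin N =>
            ∑ t : Fin b, cget c ((p.1 : ℕ) + t) * G t p.2)).filter fun uv =>
              hammingDist uv.1 uv.2 = i * Fintype.card Fq ^ (b - 1)).card : ℝ) /
          ((C.image fun c : Fin n → Fq => fun p : Fin n × Fin N =>
            ∑ t : Fin b, cget c ((p.1 : ℕ) + t) * G t p.2).card : ℝ)
        = (((C ×ˢ C).filter fun uv => db b uv.1 uv.2 = i).card : ℝ) / (C.card : ℝ)) ∧
    (∀ j : ℕ, (¬ ∃ i : ℕ, i ≤ n ∧ j = i * Fintype.card Fq ^ (b - 1)) →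
      ((((C.image fun c : Fin n → Fq => fun p : Fin n × Fin N =>
            ∑ t : Fin b, cget c ((p.1 : ℕ) + t) * G t p.2) ×ˢ
          (C.image fun c : Fin n → Fq => fun p : Fin n × Fin N =>
            ∑ t : Fin b, cget c ((p.1 : ℕ) + t) * G t p.2)).filter fun uv =>
              hammingDist uv.1 uv.2 = j).card : ℝ) /
          ((C.image fun c : Fin n → Fq => fun p : Fin n × Fin N =>
            ∑ t : Fin b, cget c ((p.1 : ℕ) + t) * G t p.2).card : ℝ) = 0) :=
  distance_distribution_concat_general hb1 G hwt C
end
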